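/- arXiv:1608.00795 — 6 statements merged into one kernel-verified Lean document; each statement's English description precedes it below -/
import Mathlib

section
/- For all complex $s$ with $\Re s > 2$, $\sum_{n=1}^{\infty} (-1)^{n-1} \sigma(n)/n^s = \left(1 - \frac{6}{2^s} + \frac{4}{2^{2s}}\right)\zeta(s)\zeta(s-1)$. -/
/-!
Write `f n = σ₁(n) / n ^ s`, whose series is `ζ(s) ζ(s - 1)` because `σ₁ = ζ * id`. The
alternating series is `∑ f - 2 ∑ f(2k)`. Splitting `k` by parity, the relations
`σ₁(4m) = 3 σ₁(2m) - 2 σ₁(m)` and `σ₁(2m) = 3 σ₁(m)` for odd `m` (the Hecke relations at `p = 2`)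
give `∑ f(2k) = (3 / 2 ^ s - 2 / 4 ^ s) ∑ f`.
-/

open ArithmeticFunction LSeries
open scoped ArithmeticFunction.sigma ArithmeticFunction.zeta LSeries.notation

namespace ArithmeticFunction

theorem sigma_prime_pow_succ {k p : ℕ} (hp : p.Prime) (a : ℕ) :
    σ k (p ^ (a + 1)) = 1 + p ^ k * σ k (p ^ a) := by
  rw [sigma_apply_prime_pow hp, sigma_apply_prime_pow hp, Finset.sum_range_succ', Finset.mul_sum,
    add_comm]
  exact congrArg₂ (· + ·) (by simp) (Finset.sum_congr rfl fun j _ ↦ by ring)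

theorem sigma_prime_mul_of_not_dvd {k p n : ℕ} (hp : p.Prime) (hn : ¬p ∣ n) :
    σ k (p * n) = (1 + p ^ k) * σ k n := by
  rw [isMultiplicative_sigma.map_mul_of_coprime ((hp.coprime_iff_not_dvd).2 hn),
    ← pow_one p, sigma_prime_pow_succ hp, pow_zero, sigma_one, mul_one, pow_one]

theorem sigma_prime_mul_prime_mul {k p : ℕ} (hp : p.Prime) (m : ℕ) :
    σ k (p * (p * m)) + p ^ k * σ k m = (1 + p ^ k) * σ k (p * m) := by
  rcases eq_or_ne m 0 with rfl | hm
  · simp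
  obtain ⟨a, u, hu, rfl⟩ := Nat.exists_eq_pow_mul_and_not_dvd hm p hp.ne_one
  have hcop (b : ℕ) : (p ^ b).Coprime u := ((hp.coprime_iff_not_dvd).2 hu).pow_left b
  simp only [← mul_assoc, ← pow_succ', isMultiplicative_sigma.map_mul_of_coprime (hcop _),
    sigma_prime_pow_succ hp]
  ring

end ArithmeticFunction

theorem Complex.natCast_mul_cpow (a b : ℕ) (s : ℂ) :
    ((a * b : ℕ) : ℂ) ^ s = (a : ℂ) ^ s * (b : ℂ) ^ s := by
  rw [Nat.cast_mul, Complex.natCast_mul_natCast_cpow]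

namespace LSeries

theorem term_pow_eq_term_one (k : ℕ) (s : ℂ) (n : ℕ) :
    term ↗(pow k) s n = term 1 (s - k) n := by
  rcases eq_or_ne n 0 with rfl | hn
  · simp
  rw [term_of_ne_zero hn, term_of_ne_zero hn, pow_apply, if_neg (by simp [hn]), Pi.one_apply,
    Complex.cpow_sub _ _ (Nat.cast_ne_zero.mpr hn), Complex.cpow_natCast, one_div_div,
    Nat.cast_pow]

variable {k p : ℕ} {s : ℂ}

theorem term_sigma_prime_mul_of_not_dvd (hp : p.Prime) {m : ℕ} (hm : ¬p ∣ m) :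
    term ↗(σ k) s (p * m) = (1 + p ^ k) * (p : ℂ) ^ (-s) * term ↗(σ k) s m := by
  have hσ := congrArg (Nat.cast : ℕ → ℂ) (sigma_prime_mul_of_not_dvd (k := k) hp hm)
  push_cast at hσ
  simp only [term_def₀ (f := ↗(σ k)) (by simp), Complex.natCast_mul_cpow]
  linear_combination ((p : ℂ) ^ (-s) * (m : ℂ) ^ (-s)) * hσ

theorem term_sigma_prime_mul_prime_mul (hp : p.Prime) (m : ℕ) :
    term ↗(σ k) s (p * (p * m)) =
      (1 + p ^ k) * (p : ℂ) ^ (-s) * term ↗(σ k) s (p * m)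
        - p ^ k * (p : ℂ) ^ (-s) * (p : ℂ) ^ (-s) * term ↗(σ k) s m := by
  have hσ := congrArg (Nat.cast : ℕ → ℂ) (sigma_prime_mul_prime_mul (k := k) hp m)
  push_cast at hσ
  simp only [term_def₀ (f := ↗(σ k)) (by simp), Complex.natCast_mul_cpow]
  linear_combination ((p : ℂ) ^ (-s) * (p : ℂ) ^ (-s) * (m : ℂ) ^ (-s)) * hσ

end LSeries

namespace ArithmeticFunction

theorem LSeriesHasSum_pow {k : ℕ} {s : ℂ} (hs : k + 1 < s.re) :
    LSeriesHasSum ↗(pow k) s (riemannZeta (s - k)) := by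
  have hterm : term ↗(pow k) s = term 1 (s - k) := funext (term_pow_eq_term_one k s)
  rw [LSeriesHasSum, hterm]
  exact LSeriesHasSum_one (by rw [Complex.sub_re, Complex.natCast_re]; linarith)

theorem LSeriesHasSum_sigma {k : ℕ} {s : ℂ} (hs : k + 1 < s.re) :
    LSeriesHasSum ↗(σ k) s (riemannZeta s * riemannZeta (s - k)) := by
  have hζ : LSeriesHasSum ↗((ζ : ArithmeticFunction ℕ) : ArithmeticFunction ℂ) s
      (riemannZeta s) := by
    simpa [natCoe_apply] using LSeriesHasSum_zeta (s := s) (by linarith)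
  have hpow : LSeriesHasSum ↗((pow k : ArithmeticFunction ℕ) : ArithmeticFunction ℂ) s
      (riemannZeta (s - k)) := by
    simpa [natCoe_apply] using LSeriesHasSum_pow hs
  simpa [← natCoe_mul, zeta_mul_pow_eq_sigma, natCoe_apply] using LSeriesHasSum_mul hζ hpow

end ArithmeticFunction

section Summation

variable {R : Type*} [NormedRing R] [CompleteSpace R] {f : ℕ → R}

theorem Summable.comp_two_mul (hf : Summable f) : Summable fun k ↦ f (2 * k) :=
  hf.comp_injective (mul_right_injective₀ two_ne_zero)

theorem Summable.comp_two_mul_add_one (hf : Summable f) : Summable fun k ↦ f (2 * k + 1) :=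
  hf.comp_injective ((add_left_injective 1).comp (mul_right_injective₀ two_ne_zero))

theorem tsum_neg_one_pow_pred_mul (hf : Summable f) (h0 : f 0 = 0) :
    ∑' n, (-1) ^ (n - 1) * f n = ∑' n, f n - 2 * ∑' k, f (2 * k) := by
  have h_even (k : ℕ) : (-1) ^ (2 * k - 1) * f (2 * k) = -f (2 * k) := by
    rcases eq_or_ne k 0 with rfl | hk
    · simp [h0]
    · rw [Odd.neg_one_pow ⟨k - 1, by omega⟩, neg_one_mul]
  have h_odd (k : ℕ) : (-1) ^ (2 * k + 1 - 1) * f (2 * k + 1) = f (2 * k + 1) := by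
    simp [pow_mul]
  rw [← tsum_even_add_odd hf.comp_two_mul hf.comp_two_mul_add_one, ← tsum_even_add_odd
    (hf.comp_two_mul.neg.congr fun k ↦ (h_even k).symm)
    (hf.comp_two_mul_add_one.congr fun k ↦ (h_odd k).symm),
    tsum_congr h_even, tsum_congr h_odd, tsum_neg, two_mul]
  abel

theorem tsum_two_mul_eq_of_recurrence (hf : Summable f) {α β : R}
    (h_even : ∀ m, f (2 * (2 * m)) = α * f (2 * m) - β * f m)
    (h_odd : ∀ m, f (2 * (2 * m + 1)) = α * f (2 * m + 1)) :
    ∑' k, f (2 * k) = (α - β) * ∑' n, f n := by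
  have he := hf.comp_two_mul
  have ho := hf.comp_two_mul_add_one
  calc ∑' k, f (2 * k)
      = ∑' m, f (2 * (2 * m)) + ∑' m, f (2 * (2 * m + 1)) :=
        (tsum_even_add_odd (f := fun k ↦ f (2 * k)) he.comp_two_mul he.comp_two_mul_add_one).symm
    _ = α * (∑' m, f (2 * m) + ∑' m, f (2 * m + 1)) - β * ∑' n, f n := by
        rw [tsum_congr h_even, tsum_congr h_odd, (he.mul_left α).tsum_sub (hf.mul_left β),
          he.tsum_mul_left, ho.tsum_mul_left, hf.tsum_mul_left, mul_add]
        abel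
    _ = (α - β) * ∑' n, f n := by
        rw [tsum_even_add_odd he ho, sub_mul]

end Summation

/-- For `Re s > 2`,
`∑ (-1)^(n-1) σ(n)/n^s = (1 - 6/2^s + 4/2^(2s)) ζ(s) ζ(s-1)`. -/
theorem alternating_dirichlet_series_sigma (s : ℂ) (hs : 2 < s.re) :
    ∑' n : ℕ+, (-1 : ℂ) ^ ((n : ℕ) - 1) * (ArithmeticFunction.sigma 1 n : ℂ) / (n : ℂ) ^ s =
      (1 - 6 / (2 : ℂ) ^ s + 4 / (2 : ℂ) ^ (2 * s)) * riemannZeta s * riemannZeta (s - 1) := by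
  have hf : HasSum (term ↗(σ 1) s) (riemannZeta s * riemannZeta (s - 1)) := by
    have := LSeriesHasSum_sigma (k := 1) (s := s) (by push_cast; linarith)
    rwa [Nat.cast_one] at this
  have h_even := tsum_two_mul_eq_of_recurrence hf.summable
    (term_sigma_prime_mul_prime_mul Nat.prime_two)
    (fun m ↦ term_sigma_prime_mul_of_not_dvd Nat.prime_two (m := 2 * m + 1) (by omega))
  have h_lhs : ∑' n : ℕ+, (-1 : ℂ) ^ ((n : ℕ) - 1) * (σ 1 n : ℂ) / (n : ℂ) ^ s
      = ∑' n, (-1) ^ (n - 1) * term ↗(σ 1) s n := by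
    rw [tsum_pnat_eq_tsum_of_eq_zero
      (f := fun n : ℕ ↦ (-1 : ℂ) ^ (n - 1) * (σ 1 n : ℂ) / (n : ℂ) ^ s) (by simp)]
    refine tsum_congr fun n ↦ ?_
    rcases eq_or_ne n 0 with rfl | hn
    · simp
    · rw [term_of_ne_zero hn, mul_div_assoc]
  have h_two_pow : (2 : ℂ) ^ (2 * s) = 2 ^ s * 2 ^ s := by
    rw [two_mul, Complex.cpow_add _ _ two_ne_zero]
  rw [h_lhs, tsum_neg_one_pow_pred_mul hf.summable (term_zero ..), h_even, hf.tsum_eq,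
    h_two_pow, Complex.cpow_neg]
  push_cast
  ring
end

section
/- For all complex $s$ with $\Re s > 2$, $\sum_{n=1}^{\infty} (-1)^{n-1} \psi(n)/n^s = \frac{2^s-5}{2^s+1} \cdot \frac{\zeta(s)\zeta(s-1)}{\zeta(2s)}$. -/
open scoped BigOperators

/-- The Dedekind psi function `ψ(n) = n ∏_{p ∣ n} (1 + 1/p)`, as a complex number. -/
noncomputable def dedekindPsi (n : ℕ) : ℂ :=
  (n : ℂ) * ∏ p ∈ n.primeFactors, (1 + (p : ℂ)⁻¹)

/-!
The function `μ₂ = extendPow 2 μ` (`μ₂(m²) = μ(m)`, zero off the squares) has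
`∑ μ₂(n) n⁻ˢ = 1 / ζ(2s)`. Both `ψ` and `μ₂ * σ₁` are multiplicative, and they agree on prime
powers because `ψ(p^(i+2)) = σ₁(p^(i+2)) - σ₁(p^i)`; hence `∑ ψ(n) n⁻ˢ = ζ(s) ζ(s-1) / ζ(2s)`.

Let `E` and `O` be the parts of this series over even and odd `n`. Since `ψ(2n)` is `2ψ(n)` for
even `n` and `3ψ(n)` for odd `n`, `2ˢ E = 2E + 3O`. The alternating series is `O - E`, and
`(O - E)(2ˢ + 1) = (O + E)(2ˢ - 5)` follows.
-/

open scoped ArithmeticFunction.Moebius ArithmeticFunction.sigma ArithmeticFunction.zeta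

namespace ArithmeticFunction

section ExtendPow

variable {R : Type*} {k : ℕ}

noncomputable def extendPow [Zero R] (k : ℕ) (f : ArithmeticFunction R) : ArithmeticFunction R where
  toFun := Function.extend (· ^ k) f 0
  map_zero' := by
    rcases eq_or_ne k 0 with rfl | hk
    · exact Function.extend_apply' _ _ _ (by simp)
    · simpa [zero_pow hk] using (Nat.pow_left_injective hk).extend_apply f 0 0

theorem extendPow_apply_pow [Zero R] (hk : k ≠ 0) (f : ArithmeticFunction R) (m : ℕ) :
    extendPow k f (m ^ k) = f m :=
  (Nat.pow_left_injective hk).extend_apply f 0 m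

theorem extendPow_apply_of_forall_pow_ne [Zero R] (f : ArithmeticFunction R) {n : ℕ}
    (h : ∀ m, m ^ k ≠ n) : extendPow k f n = 0 :=
  Function.extend_apply' _ _ _ fun ⟨m, hm⟩ ↦ h m hm

theorem IsMultiplicative.extendPow [MonoidWithZero R] {f : ArithmeticFunction R}
    (hf : f.IsMultiplicative) (hk : k ≠ 0) : (extendPow k f).IsMultiplicative := by
  refine ⟨by simpa using (extendPow_apply_pow hk f 1).trans hf.map_one, fun {m n} hmn ↦ ?_⟩
  have hunit : IsUnit (gcd m n) := Nat.isUnit_iff.mpr hmn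
  by_cases h : (∃ a, a ^ k = m) ∧ ∃ b, b ^ k = n
  · obtain ⟨⟨a, rfl⟩, b, rfl⟩ := h
    rw [← mul_pow, extendPow_apply_pow hk, extendPow_apply_pow hk, extendPow_apply_pow hk,
      hf.map_mul_of_coprime ((Nat.coprime_pow_left_iff (Nat.pos_of_ne_zero hk) _ _).mp
        ((Nat.coprime_pow_right_iff (Nat.pos_of_ne_zero hk) _ _).mp hmn))]
  · have hmn_ne : ∀ c, c ^ k ≠ m * n := fun c hc ↦ h
      ⟨(exists_eq_pow_of_mul_eq_pow hunit hc.symm).imp fun _ ↦ Eq.symm,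
        (exists_eq_pow_of_mul_eq_pow (gcd_comm m n ▸ hunit) (mul_comm m n ▸ hc.symm)).imp
          fun _ ↦ Eq.symm⟩
    rw [extendPow_apply_of_forall_pow_ne f hmn_ne]
    rcases not_and_or.mp h with hm | hn
    · rw [extendPow_apply_of_forall_pow_ne f (not_exists.mp hm), zero_mul]
    · rw [extendPow_apply_of_forall_pow_ne f (not_exists.mp hn), mul_zero]

theorem extendPow_apply_prime_pow [Zero R] (hk : k ≠ 0) (f : ArithmeticFunction R) {p : ℕ}
    (hp : p.Prime) (j : ℕ) :
    extendPow k f (p ^ j) = if k ∣ j then f (p ^ (j / k)) else 0 := by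
  split_ifs with hkj
  · obtain ⟨t, rfl⟩ := hkj
    rw [Nat.mul_div_cancel_left t (Nat.pos_of_ne_zero hk), mul_comm, pow_mul,
      extendPow_apply_pow hk]
  · refine extendPow_apply_of_forall_pow_ne f fun m hm ↦ hkj ?_
    obtain ⟨t, -, rfl⟩ := (Nat.dvd_prime_pow hp).mp (Dvd.intro_left _ (pow_sub_one_mul hk m ▸ hm))
    rw [← pow_mul] at hm
    exact ⟨t, (Nat.pow_right_injective hp.two_le hm).symm.trans (mul_comm t k)⟩

end ExtendPow

theorem mul_apply_prime_pow {R : Type*} [Semiring R] (f g : ArithmeticFunction R) {p : ℕ}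
    (hp : p.Prime) (i : ℕ) :
    (f * g) (p ^ i) = ∑ j ∈ Finset.range (i + 1), f (p ^ j) * g (p ^ (i - j)) := by
  rw [mul_apply, Nat.sum_divisorsAntidiagonal (fun x y ↦ f x * g y),
    Nat.sum_divisors_prime_pow hp]
  refine Finset.sum_congr rfl fun j hj ↦ ?_
  rw [Nat.pow_div (Nat.lt_succ_iff.mp (Finset.mem_range.mp hj)) hp.pos]

theorem extendPow_two_moebius_apply_prime_pow {R : Type*} [Ring R] {p : ℕ} (hp : p.Prime)
    (j : ℕ) :
    extendPow 2 (μ : ArithmeticFunction R) (p ^ j) =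
      if j = 0 then 1 else if j = 2 then -1 else 0 := by
  rw [extendPow_apply_prime_pow two_ne_zero _ hp, intCoe_apply]
  rcases Nat.even_or_odd' j with ⟨t, rfl | rfl⟩
  · rw [if_pos (dvd_mul_right 2 t), Nat.mul_div_cancel_left t two_pos]
    rcases t with _ | _ | t
    · simp
    · simp [moebius_apply_prime hp]
    · rw [moebius_apply_prime_pow hp (by omega), if_neg (by omega), if_neg (by omega),
        if_neg (by omega), Int.cast_zero]
  · rw [if_neg (by omega), if_neg (by omega), if_neg (by omega)]

theorem extendPow_two_moebius_mul_apply_prime_pow {R : Type*} [Ring R] (g : ArithmeticFunction R)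
    {p : ℕ} (hp : p.Prime) (i : ℕ) :
    (extendPow 2 (μ : ArithmeticFunction R) * g) (p ^ i) =
      g (p ^ i) - if 2 ≤ i then g (p ^ (i - 2)) else 0 := by
  have hterm (j : ℕ) : extendPow 2 (μ : ArithmeticFunction R) (p ^ j) * g (p ^ (i - j)) =
      (if j = 0 then g (p ^ (i - j)) else 0) - if j = 2 then g (p ^ (i - j)) else 0 := by
    rw [extendPow_two_moebius_apply_prime_pow hp]
    split_ifs <;> simp_all
  simp [mul_apply_prime_pow _ _ hp, hterm, Finset.sum_sub_distrib]

end ArithmeticFunction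

open ArithmeticFunction

namespace LSeries

theorem term_natCast_mul (f : ℕ → ℂ) (s : ℂ) : term (fun n ↦ n * f n) s = term f (s - 1) := by
  funext n
  rcases eq_or_ne n 0 with rfl | hn
  · simp
  · have hn' : (n : ℂ) ≠ 0 := Nat.cast_ne_zero.mpr hn
    rw [term_of_ne_zero hn, term_of_ne_zero hn, Complex.cpow_sub _ _ hn', Complex.cpow_one]
    field_simp

theorem term_mul_of_apply_mul_eq {f : ℕ → ℂ} {k m : ℕ} {c : ℂ} (hk : k ≠ 0)
    (h : f (k * m) = c * f m) (s : ℂ) : term f s (k * m) = c / (k : ℂ) ^ s * term f s m := by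
  rcases eq_or_ne m 0 with rfl | hm
  · simp
  rw [term_of_ne_zero (mul_ne_zero hk hm), term_of_ne_zero hm, h, Nat.cast_mul,
    Complex.natCast_mul_natCast_cpow]
  field_simp

theorem term_extendPow {k : ℕ} (hk : k ≠ 0) (f : ArithmeticFunction ℂ) (s : ℂ) :
    term (extendPow k f) s = Function.extend (· ^ k) (term f (k * s)) 0 := by
  funext n
  by_cases h : ∃ m, m ^ k = n
  · obtain ⟨m, rfl⟩ := h
    rw [(Nat.pow_left_injective hk).extend_apply]
    rcases eq_or_ne m 0 with rfl | hm
    · simp [zero_pow hk]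
    · rw [term_of_ne_zero (pow_ne_zero k hm), term_of_ne_zero hm, extendPow_apply_pow hk,
        Complex.natCast_cpow_natCast_mul, Nat.cast_pow]
  · rw [Function.extend_apply' _ _ _ h, term_def,
      extendPow_apply_of_forall_pow_ne f (not_exists.mp h)]
    simp

end LSeries

open LSeries
open scoped LSeries.notation

namespace ArithmeticFunction

theorem LSeriesHasSum_extendPow_iff {k : ℕ} (hk : k ≠ 0) {f : ArithmeticFunction ℂ} {s a : ℂ} :
    LSeriesHasSum (extendPow k f) s a ↔ LSeriesHasSum f (k * s) a := by
  rw [LSeriesHasSum, term_extendPow hk, hasSum_extend_zero (Nat.pow_left_injective hk)]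
  rfl

theorem LSeriesHasSum_moebius {s : ℂ} (hs : 1 < s.re) : LSeriesHasSum ↗μ s (riemannZeta s)⁻¹ := by
  have h := LSeries_one_mul_Lseries_moebius hs
  rw [LSeries_one_eq_riemannZeta hs] at h
  rw [← eq_inv_of_mul_eq_one_right h]
  exact (LSeriesSummable_moebius_iff.mpr hs).LSeriesHasSum

theorem LSeriesHasSum_sigma_one {s : ℂ} (hs : 2 < s.re) :
    LSeriesHasSum ↗(σ 1 : ArithmeticFunction ℂ) s (riemannZeta s * riemannZeta (s - 1)) := by
  have hs1 : 1 < s.re := by linarith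
  have hζ : LSeriesHasSum ↗(ζ : ArithmeticFunction ℂ) s (riemannZeta s) := by
    simpa using LSeriesHasSum_zeta hs1
  have hid : LSeriesHasSum ↗((pow 1 : ArithmeticFunction ℕ) : ArithmeticFunction ℂ) s
      (riemannZeta (s - 1)) := by
    have hpow : ⇑((pow 1 : ArithmeticFunction ℕ) : ArithmeticFunction ℂ) =
        fun n ↦ n * (1 : ℕ → ℂ) n := by
      funext n
      simp [pow_apply]
    rw [hpow, LSeriesHasSum, term_natCast_mul]
    exact LSeriesHasSum_one (by rw [Complex.sub_re, Complex.one_re]; linarith)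
  rw [← zeta_mul_pow_eq_sigma, natCoe_mul]
  exact LSeriesHasSum_mul hζ hid

end ArithmeticFunction

theorem tsum_eq_tsum_even_add_tsum_odd {E : Type*} [NormedAddCommGroup E] [CompleteSpace E]
    {f : ℕ → E} (hf : Summable f) :
    ∑' n, f n = ∑' m, f (2 * m) + ∑' m, f (2 * m + 1) :=
  (tsum_even_add_odd (hf.comp_injective (mul_right_injective₀ two_ne_zero))
    (hf.comp_injective ((add_left_injective 1).comp (mul_right_injective₀ two_ne_zero)))).symm

theorem tsum_pnat_div_cpow (f : ℕ → ℂ) (s : ℂ) : ∑' n : ℕ+, f n / (n : ℂ) ^ s = LSeries f s := by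
  rw [LSeries, ← tsum_pnat_eq_tsum_of_eq_zero (term_zero f s)]
  exact tsum_congr fun n ↦ (term_of_ne_zero n.ne_zero f s).symm

theorem LSeries_neg_one_pow_mul {f : ℕ → ℂ} {s : ℂ} (hf : LSeriesSummable f s) :
    LSeries (fun n ↦ (-1) ^ (n - 1) * f n) s =
      ∑' m, term f s (2 * m + 1) - ∑' m, term f s (2 * m) := by
  have hterm (n : ℕ) : term (fun n ↦ (-1) ^ (n - 1) * f n) s n = (-1) ^ (n - 1) * term f s n := by
    rcases eq_or_ne n 0 with rfl | hn
    · simp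
    · simp [term_of_ne_zero hn, mul_div_assoc]
  have heven (m : ℕ) : (-1 : ℂ) ^ (2 * m - 1) * term f s (2 * m) = -term f s (2 * m) := by
    rcases eq_or_ne m 0 with rfl | hm
    · simp
    · simp [(Nat.Even.sub_odd (by omega) (even_two_mul m) odd_one).neg_one_pow]
  have hsum : Summable fun n ↦ (-1 : ℂ) ^ (n - 1) * term f s n :=
    (Summable.norm hf).of_norm_bounded fun n ↦ by simp
  rw [LSeries, tsum_congr hterm, tsum_eq_tsum_even_add_tsum_odd hsum, tsum_congr heven, tsum_neg]
  simp only [Nat.add_sub_cancel, (even_two_mul _).neg_one_pow, one_mul]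
  ring

theorem two_cpow_add_one_ne_zero {s : ℂ} (hs : 0 < s.re) : (2 : ℂ) ^ s + 1 ≠ 0 := by
  intro h
  have h1 : ‖(2 : ℂ) ^ s‖ = 1 := by rw [eq_neg_of_add_eq_zero_left h, norm_neg, norm_one]
  rw [show (2 : ℂ) = ((2 : ℝ) : ℂ) by norm_num, Complex.norm_cpow_eq_rpow_re_of_pos two_pos] at h1
  exact (Real.one_lt_rpow one_lt_two hs).ne' h1

theorem dedekindPsi_prime_pow_succ {p : ℕ} (hp : p.Prime) (i : ℕ) :
    dedekindPsi (p ^ (i + 1)) = (p : ℂ) ^ (i + 1) + (p : ℂ) ^ i := by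
  have hp0 : (p : ℂ) ≠ 0 := Nat.cast_ne_zero.mpr hp.ne_zero
  rw [dedekindPsi, Nat.primeFactors_prime_pow i.succ_ne_zero hp, Finset.prod_singleton]
  push_cast
  field_simp
  ring

theorem dedekindPsi_prime_mul_of_dvd {p n : ℕ} (hp : p.Prime) (h : p ∣ n) :
    dedekindPsi (p * n) = p * dedekindPsi n := by
  rcases eq_or_ne n 0 with rfl | hn
  · simp [dedekindPsi]
  rw [dedekindPsi, dedekindPsi, Nat.primeFactors_mul hp.ne_zero hn, hp.primeFactors,
    Finset.union_eq_right.mpr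
      (Finset.singleton_subset_iff.mpr (Nat.mem_primeFactors.mpr ⟨hp, h, hn⟩))]
  push_cast
  ring

theorem dedekindPsi_prime_mul_of_not_dvd {p n : ℕ} (hp : p.Prime) (h : ¬ p ∣ n) :
    dedekindPsi (p * n) = (p + 1) * dedekindPsi n := by
  have hn : n ≠ 0 := by rintro rfl; exact h (dvd_zero p)
  have hp0 : (p : ℂ) ≠ 0 := Nat.cast_ne_zero.mpr hp.ne_zero
  rw [dedekindPsi, dedekindPsi, Nat.primeFactors_mul hp.ne_zero hn, hp.primeFactors,
    Finset.prod_union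
      (Finset.disjoint_singleton_left.mpr fun hp' ↦ h (Nat.dvd_of_mem_primeFactors hp')),
    Finset.prod_singleton]
  push_cast
  field_simp

theorem dedekindPsi_eq_pmul_prodPrimeFactors :
    dedekindPsi = ⇑(((pow 1 : ArithmeticFunction ℕ) : ArithmeticFunction ℂ).pmul
      (prodPrimeFactors fun p ↦ 1 + (p : ℂ)⁻¹)) := by
  funext n
  rcases eq_or_ne n 0 with rfl | hn
  · simp [dedekindPsi]
  · simp [dedekindPsi, pmul_apply, prodPrimeFactors_apply hn, pow_apply, hn]

theorem dedekindPsi_eq_extendPow_moebius_mul_sigma :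
    dedekindPsi = ⇑(extendPow 2 (μ : ArithmeticFunction ℂ) * (σ 1 : ArithmeticFunction ℂ)) := by
  rw [dedekindPsi_eq_pmul_prodPrimeFactors]
  refine congrArg DFunLike.coe <| (IsMultiplicative.eq_iff_eq_on_prime_powers _
    (isMultiplicative_pow.natCast.pmul (IsMultiplicative.prodPrimeFactors _)) _
    ((isMultiplicative_moebius.intCast.extendPow two_ne_zero).mul
      isMultiplicative_sigma.natCast)).mpr fun p i hp ↦ ?_
  rw [← dedekindPsi_eq_pmul_prodPrimeFactors, extendPow_two_moebius_mul_apply_prime_pow _ hp,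
    natCoe_apply]
  rcases i with _ | _ | i
  · simp [dedekindPsi]
  · rw [if_neg (by omega), sub_zero, dedekindPsi_prime_pow_succ hp, sigma_one_apply_prime_pow hp]
    push_cast [Finset.sum_range_succ]
    ring
  · rw [if_pos (by omega), dedekindPsi_prime_pow_succ hp, natCoe_apply,
      sigma_one_apply_prime_pow hp, sigma_one_apply_prime_pow hp, show i + 1 + 1 - 2 = i by omega]
    push_cast [Finset.sum_range_succ]
    ring

theorem LSeriesHasSum_dedekindPsi {s : ℂ} (hs : 2 < s.re) :
    LSeriesHasSum dedekindPsi s (riemannZeta s * riemannZeta (s - 1) / riemannZeta (2 * s)) := by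
  have hμ : LSeriesHasSum ↗(extendPow 2 (μ : ArithmeticFunction ℂ)) s (riemannZeta (2 * s))⁻¹ :=
    (LSeriesHasSum_extendPow_iff two_ne_zero).mpr <| by
      rw [show ⇑(μ : ArithmeticFunction ℂ) = ↗μ from funext fun _ ↦ intCoe_apply]
      exact_mod_cast LSeriesHasSum_moebius (s := 2 * s)
        (by rw [show (2 * s).re = 2 * s.re by simp]; linarith)
  rw [dedekindPsi_eq_extendPow_moebius_mul_sigma, div_eq_inv_mul]
  exact LSeriesHasSum_mul hμ (LSeriesHasSum_sigma_one hs)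

theorem two_cpow_mul_tsum_term_dedekindPsi_even {s : ℂ} (hψ : LSeriesSummable dedekindPsi s) :
    (2 : ℂ) ^ s * ∑' m, term dedekindPsi s (2 * m) =
      2 * ∑' m, term dedekindPsi s (2 * m) + 3 * ∑' m, term dedekindPsi s (2 * m + 1) := by
  have h_even (m : ℕ) : term dedekindPsi s (2 * (2 * m)) = 2 / 2 ^ s * term dedekindPsi s (2 * m) :=
    mod_cast term_mul_of_apply_mul_eq two_ne_zero
      (dedekindPsi_prime_mul_of_dvd Nat.prime_two (dvd_mul_right 2 m)) s
  have h_odd (m : ℕ) :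
      term dedekindPsi s (2 * (2 * m + 1)) = 3 / 2 ^ s * term dedekindPsi s (2 * m + 1) := by
    convert term_mul_of_apply_mul_eq two_ne_zero
      (dedekindPsi_prime_mul_of_not_dvd Nat.prime_two (by omega : ¬ 2 ∣ 2 * m + 1)) s using 2
    norm_num
  have hsplit : ∑' m, term dedekindPsi s (2 * m) =
      2 / 2 ^ s * ∑' m, term dedekindPsi s (2 * m) +
        3 / 2 ^ s * ∑' m, term dedekindPsi s (2 * m + 1) := by
    conv_lhs => rw [tsum_eq_tsum_even_add_tsum_odd (f := fun m ↦ term dedekindPsi s (2 * m))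
      (hψ.comp_injective (mul_right_injective₀ two_ne_zero))]
    rw [tsum_congr h_even, tsum_congr h_odd, tsum_mul_left, tsum_mul_left]
  nth_rewrite 1 [hsplit]
  field_simp

theorem LSeries_neg_one_pow_mul_dedekindPsi {s : ℂ} (hψ : LSeriesSummable dedekindPsi s)
    (hs : (2 : ℂ) ^ s + 1 ≠ 0) :
    LSeries (fun n ↦ (-1) ^ (n - 1) * dedekindPsi n) s =
      ((2 : ℂ) ^ s - 5) / ((2 : ℂ) ^ s + 1) * LSeries dedekindPsi s := by
  rw [LSeries_neg_one_pow_mul hψ, LSeries, tsum_eq_tsum_even_add_tsum_odd hψ]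
  field_simp
  linear_combination (-2 : ℂ) * two_cpow_mul_tsum_term_dedekindPsi_even hψ

/-- For `Re s > 2`,
`∑ (-1)^(n-1) ψ(n)/n^s = (2^s - 5)/(2^s + 1) * ζ(s)ζ(s-1)/ζ(2s)`. -/
theorem alternating_dirichlet_series_dedekind_psi (s : ℂ) (hs : 2 < s.re) :
    ∑' n : ℕ+, (-1 : ℂ) ^ ((n : ℕ) - 1) * dedekindPsi n / (n : ℂ) ^ s =
      ((2 : ℂ) ^ s - 5) / ((2 : ℂ) ^ s + 1) *
        (riemannZeta s * riemannZeta (s - 1) / riemannZeta (2 * s)) := by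
  have hψ := LSeriesHasSum_dedekindPsi hs
  rw [tsum_pnat_div_cpow (fun n ↦ (-1) ^ (n - 1) * dedekindPsi n),
    LSeries_neg_one_pow_mul_dedekindPsi hψ.LSeriesSummable (two_cpow_add_one_ne_zero (by linarith)),
    hψ.LSeries_eq]
end

section
/- Let $(a_\nu)_{\nu\ge 0}$ be a sequence of positive reals that is log-convex, i.e., $a_\nu^2 \le a_{\nu-1} a_{\nu+1}$ for all $\nu \ge 1$. Let $(b_\nu)_{\nu\ge 0}$ be the coefficients of the formal reciprocal power series, i.e., $b_0 = 1/a_0$ and $\sum_{j=0}^{\nu} a_j b_{\nu-j} = 0$ for $\nu \ge 1$. Then $b_\nu \le 0$ for all $\nu \ge 1$. -/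
open scoped BigOperators

/-- Kaluza's theorem: if `(a ν)` is positive and log-convex, then the
coefficients of the reciprocal power series satisfy `b ν ≤ 0` for `ν ≥ 1`. -/
theorem kaluza_reciprocal_coeff_nonpos
    (a b : ℕ → ℝ)
    (hpos : ∀ ν, 0 < a ν)
    (hlogconvex : ∀ ν : ℕ, 1 ≤ ν → (a ν) ^ 2 ≤ a (ν - 1) * a (ν + 1))
    (hb0 : b 0 = 1 / a 0)
    (hrec : ∀ ν : ℕ, 1 ≤ ν → ∑ j ∈ Finset.range (ν + 1), a j * b (ν - j) = 0) :
    ∀ ν : ℕ, 1 ≤ ν → b ν ≤ 0 := by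
  -- cross-multiplied monotonicity of ratios
  have hr : ∀ i j : ℕ, i ≤ j → a (i+1) * a j ≤ a i * a (j+1) := by
    intro i j hij
    induction j, hij using Nat.le_induction with
    | base => ring_nf; exact le_refl _
    | succ j hij ih =>
      have hl := hlogconvex (j+1) (by omega)
      simp only [Nat.add_sub_cancel] at hl
      nlinarith [hpos i, hpos (i+1), hpos j, hpos (j+1), hpos (j+2)]
  intro ν
  induction ν using Nat.strong_induction_on with
  | _ ν ih =>
    intro hν
    match ν, hν with
    | 1, _ =>
      have h := hrec 1 le_rfl
      simp [Finset.sum_range_succ] at h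
      have ha0 := hpos 0
      have ha1 := hpos 1
      have hb0' : 0 < b 0 := by rw [hb0]; positivity
      nlinarith
    | (m+2), _ =>
      set c : ℝ := a (m+2) / a (m+1) with hc
      have ham1 := hpos (m+1)
      have key : a 0 * b (m+2)
          = ∑ i ∈ Finset.range (m+2), (c * a i - a (i+1)) * b (m+1-i) := by
        have hA : (∑ i ∈ Finset.range (m+2), a (i+1) * b (m+1-i)) + a 0 * b (m+2) = 0 := by
          have h := hrec (m+2) (by omega)
          rw [Finset.sum_range_succ'] at h
          simpa using h
        have hB : ∑ i ∈ Finset.range (m+2), a i * b (m+1-i) = 0 := by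
          simpa using hrec (m+1) (by omega)
        have : ∑ i ∈ Finset.range (m+2), (c * a i - a (i+1)) * b (m+1-i)
            = c * (∑ i ∈ Finset.range (m+2), a i * b (m+1-i))
              - ∑ i ∈ Finset.range (m+2), a (i+1) * b (m+1-i) := by
          rw [Finset.mul_sum, ← Finset.sum_sub_distrib]
          apply Finset.sum_congr rfl
          intro i _; ring
        rw [this, hB]; linarith
      have hsum : (∑ i ∈ Finset.range (m+2), (c * a i - a (i+1)) * b (m+1-i)) ≤ 0 := by
        apply Finset.sum_nonpos
        intro i hi
        simp only [Finset.mem_range] at hi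
        rcases Nat.lt_or_ge i (m+1) with hlt | hge
        · apply mul_nonpos_of_nonneg_of_nonpos
          · have := hr i (m+1) (by omega)
            rw [hc, sub_nonneg, div_mul_eq_mul_div, le_div_iff₀ ham1]
            linarith
          · exact ih (m+1-i) (by omega) (by omega)
        · have : i = m+1 := by omega
          subst this
          have : c * a (m+1) - a (m+2) = 0 := by
            rw [hc, div_mul_cancel₀]; · ring
            · exact ne_of_gt ham1
          rw [this, zero_mul]
      have ha0 := hpos 0
      nlinarith
end

section
/- Let $(a_\nu)_{\nu\ge 0}$ be a sequence of positive reals that is log-convex ($a_\nu^2 \le a_{\nu-1} a_{\nu+1}$ for all $\nu \ge 1$), and let $(b_\nu)$ be the coefficients of the formal reciprocal power series. Then $-a_\nu/a_0^2 \le b_\nu \le 0$ for all $\nu \ge 1$. -/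
open scoped BigOperators

/-- if `(a ν)` is positive and log-convex, then the coefficients of the
reciprocal power series satisfy `-a ν / a 0 ^ 2 ≤ b ν ≤ 0` for `ν ≥ 1`. -/
theorem kaluza_reciprocal_coeff_bounds
    (a b : ℕ → ℝ)
    (hpos : ∀ ν, 0 < a ν)
    (hlogconvex : ∀ ν : ℕ, 1 ≤ ν → (a ν) ^ 2 ≤ a (ν - 1) * a (ν + 1))
    (hb0 : b 0 = 1 / a 0)
    (hrec : ∀ ν : ℕ, 1 ≤ ν → ∑ j ∈ Finset.range (ν + 1), a j * b (ν - j) = 0) :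
    ∀ ν : ℕ, 1 ≤ ν → -(a ν / a 0 ^ 2) ≤ b ν ∧ b ν ≤ 0 := by
  -- ratios are nondecreasing
  have hratio : ∀ k ν : ℕ, k ≤ ν → a (k+1) * a ν ≤ a k * a (ν+1) := by
    have hmono : Monotone (fun k => a (k+1) / a k) := by
      apply monotone_nat_of_le_succ
      intro n
      rw [div_le_div_iff₀ (hpos n) (hpos (n+1))]
      have h := hlogconvex (n+1) (by omega)
      simp only [Nat.add_sub_cancel] at h
      nlinarith [h]
    intro k ν hk
    have h := hmono hk
    rw [div_le_div_iff₀ (hpos k) (hpos ν)] at h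
    nlinarith [h]
  have hb0pos : 0 < b 0 := by rw [hb0]; exact one_div_pos.mpr (hpos 0)
  -- nonpositivity of b ν for ν ≥ 1
  have hb_nonpos : ∀ ν : ℕ, 1 ≤ ν → b ν ≤ 0 := by
    intro ν
    induction ν using Nat.strong_induction_on with
    | _ ν ih =>
      intro hν
      match ν, hν, ih with
      | 1, _, _ =>
        have h := hrec 1 le_rfl
        simp [Finset.sum_range_succ] at h
        nlinarith [hpos 0, hpos 1, hb0pos, h]
      | (m+2), _, ih =>
        set μ := m + 1 with hμdef
        have hμ : 1 ≤ μ := by omega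
        have h2 := hrec μ hμ
        have h1 := hrec (μ+1) (by omega)
        rw [Finset.sum_range_succ'] at h1
        simp only [Nat.succ_sub_succ, Nat.sub_zero] at h1
        have hT : 0 ≤ ∑ i ∈ Finset.range (μ+1), a (i+1) * b (μ - i) := by
          have key : ∑ i ∈ Finset.range (μ+1), a (i+1) * b (μ - i)
              = ∑ i ∈ Finset.range (μ+1),
                  (a (i+1) - a (μ+1)/a μ * a i) * b (μ - i) := by
            rw [← sub_eq_zero, ← Finset.sum_sub_distrib]
            have hterm : ∀ i, a (i+1) * b (μ-i) - (a (i+1) - a (μ+1)/a μ * a i) * b (μ-i)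
                = a (μ+1)/a μ * (a i * b (μ-i)) := by intro i; ring
            simp only [hterm]
            rw [← Finset.mul_sum, h2, mul_zero]
          rw [key]
          apply Finset.sum_nonneg
          intro i hi
          rw [Finset.mem_range, Nat.lt_succ_iff] at hi
          rcases eq_or_lt_of_le hi with hiμ | hiμ
          · have hc : a (i+1) - a (μ+1)/a μ * a i = 0 := by
              rw [hiμ]; rw [div_mul_eq_mul_div, mul_div_assoc, div_self (ne_of_gt (hpos μ))]; ring
            rw [hc, zero_mul]
          · have hbneg : b (μ - i) ≤ 0 := ih (μ - i) (by omega) (by omega)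
            have hcoef : a (i+1) - a (μ+1)/a μ * a i ≤ 0 := by
              have h := hratio i μ (le_of_lt hiμ)
              rw [sub_nonpos, div_mul_eq_mul_div, le_div_iff₀ (hpos μ)]
              nlinarith [h]
            nlinarith [hcoef, hbneg]
        have ha0 := hpos 0
        nlinarith [hT, h1, ha0]
  -- main statement
  intro ν hν
  refine ⟨?_, hb_nonpos ν hν⟩
  obtain ⟨m, rfl⟩ : ∃ m, ν = m + 1 := ⟨ν - 1, by omega⟩
  have h := hrec (m+1) (by omega)
  rw [Finset.sum_range_succ'] at h
  simp only [Nat.succ_sub_succ, Nat.sub_zero] at h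
  rw [Finset.sum_range_succ] at h
  simp only [Nat.sub_self, hb0] at h
  have ha0 := hpos 0
  have hne : a 0 ≠ 0 := ne_of_gt ha0
  have hsum : ∑ i ∈ Finset.range m, a (i+1) * b (m - i) ≤ 0 := by
    apply Finset.sum_nonpos
    intro i hi
    rw [Finset.mem_range] at hi
    have hb := hb_nonpos (m - i) (by omega)
    nlinarith [hpos (i+1), hb]
  rw [← neg_div, div_le_iff₀ (by positivity : (0:ℝ) < a 0 ^ 2)]
  have h' : a 0 * (∑ i ∈ Finset.range m, a (i+1) * b (m - i)) + a (m+1)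
      + a 0 ^ 2 * b (m+1) = 0 := by
    field_simp at h
    nlinarith [h]
  nlinarith [mul_nonpos_of_nonneg_of_nonpos ha0.le hsum, h']
end

section
/- The coefficients $b_\nu$ of the power series $-x/\log(1-x) = \sum_{\nu\ge 0} b_\nu x^\nu$ (the reciprocal of $\sum_{\nu\ge 0} x^\nu/(\nu+1)$) satisfy $b_0 = 1$ and $-\frac{1}{\nu+1} \le b_\nu \le 0$ for all $\nu \ge 1$. -/
open scoped BigOperators

/-- the coefficients of `-x / log(1-x)`, i.e. of the reciprocal of the
power series `∑_{ν ≥ 0} x^ν/(ν+1)`, satisfy `b 0 = 1` and `-1/(ν+1) ≤ b ν ≤ 0`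
for all `ν ≥ 1`. -/
theorem reciprocal_of_tau_bell_series_bounds
    (b : ℕ → ℝ) (hb0 : b 0 = 1)
    (hrec : ∀ ν : ℕ, 1 ≤ ν → ∑ j ∈ Finset.range (ν + 1), b (ν - j) / (j + 1) = 0) :
    ∀ ν : ℕ, 1 ≤ ν → -(1 / (ν + 1 : ℝ)) ≤ b ν ∧ b ν ≤ 0 := by
  have key : ∀ ν : ℕ, 1 ≤ ν → b ν = -∑ j ∈ Finset.Ico 1 (ν+1), b (ν-j) / (j+1) := by
    intro ν hν
    have h := hrec ν hν
    rw [Finset.range_eq_Ico, Finset.sum_eq_sum_Ico_succ_bot (by omega)] at h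
    simp only [Nat.sub_zero, Nat.cast_zero, zero_add, div_one] at h
    linarith
  intro ν
  induction ν using Nat.strong_induction_on with
  | _ ν ih =>
    intro hν
    have hub : b ν ≤ 0 := by
      match ν, hν with
      | 1, _ =>
        have h := key 1 le_rfl
        norm_num [Finset.sum_Ico_eq_sum_range, hb0] at h
        linarith
      | (μ+2), _ =>
        have shift : ∑ j ∈ Finset.Ico 1 (μ+2+1), b (μ+2-j) / (j:ℝ) = 0 := by
          have h := hrec (μ+1) (by omega)
          rw [Finset.sum_Ico_eq_sum_range]
          simp only [show μ+2+1-1 = μ+2 from rfl]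
          rw [← h]
          apply Finset.sum_congr rfl
          intro j hj
          congr 1
          · congr 1; omega
          · push_cast; ring
        have hk := key (μ+2) (by omega)
        have expand : ∑ j ∈ Finset.Ico 1 (μ+2+1),
              b (μ+2-j) * (1/((j:ℝ)+1) - ((μ:ℝ)+2)/((μ:ℝ)+3) / j)
            = ∑ j ∈ Finset.Ico 1 (μ+2+1), b (μ+2-j) / ((j:ℝ)+1)
              - ((μ:ℝ)+2)/((μ:ℝ)+3) * ∑ j ∈ Finset.Ico 1 (μ+2+1), b (μ+2-j) / (j:ℝ) := by
          rw [Finset.mul_sum, ← Finset.sum_sub_distrib]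
          exact Finset.sum_congr rfl fun j _ => by ring
        have termnn : ∀ j ∈ Finset.Ico 1 (μ+2+1),
            0 ≤ b (μ+2-j) * (1/((j:ℝ)+1) - ((μ:ℝ)+2)/((μ:ℝ)+3) / j) := by
          intro j hj
          simp only [Finset.mem_Ico] at hj
          rcases eq_or_lt_of_le (Nat.lt_succ_iff.mp hj.2) with hje | hjl
          · have hc : 1/((j:ℝ)+1) - ((μ:ℝ)+2)/((μ:ℝ)+3) / j = 0 := by
              subst hje
              have h1 : ((μ:ℝ)+2) ≠ 0 := by positivity
              have h2 : ((μ:ℝ)+3) ≠ 0 := by positivity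
              push_cast
              field_simp
              ring
            rw [hc, mul_zero]
          · have hb1 : b (μ+2-j) ≤ 0 := (ih (μ+2-j) (by omega) (by omega)).2
            have hj1 : (1:ℝ) ≤ (j:ℝ) := by exact_mod_cast hj.1
            have hjμ : (j:ℝ) ≤ (μ:ℝ) + 1 := by exact_mod_cast Nat.lt_succ_iff.mp (by omega : j < μ + 2)
            have hc : 1/((j:ℝ)+1) - ((μ:ℝ)+2)/((μ:ℝ)+3) / j ≤ 0 := by
              rw [div_div, sub_nonpos, div_le_div_iff₀ (by positivity) (by positivity)]
              nlinarith
            nlinarith [mul_nonneg (neg_nonneg.2 hb1) (neg_nonneg.2 hc)]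
        have hsum : 0 ≤ ∑ j ∈ Finset.Ico 1 (μ+2+1),
            b (μ+2-j) * (1/((j:ℝ)+1) - ((μ:ℝ)+2)/((μ:ℝ)+3) / j) :=
          Finset.sum_nonneg termnn
        rw [expand, shift, mul_zero, sub_zero] at hsum
        linarith [hk, hsum]
    refine ⟨?_, hub⟩
    have hk := key ν hν
    rw [Finset.sum_Ico_succ_top hν] at hk
    have hrest : ∑ j ∈ Finset.Ico 1 ν, b (ν-j) / ((j:ℝ)+1) ≤ 0 := by
      apply Finset.sum_nonpos
      intro j hj
      simp only [Finset.mem_Ico] at hj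
      have hbj : b (ν-j) ≤ 0 := (ih (ν-j) (by omega) (by omega)).2
      have : (0:ℝ) < (j:ℝ) + 1 := by positivity
      exact div_nonpos_of_nonpos_of_nonneg hbj this.le
    rw [Nat.sub_self, hb0] at hk
    rw [hk]
    have : (0:ℝ) < (ν:ℝ) + 1 := by positivity
    have h1 : 1 / ((ν:ℝ)+1) = 1 / ((ν:ℝ)+1) := rfl
    linarith [hrest]
end

section
/- Let $f$ be the multiplicative function with $f(p) = 1$, $f(p^2) = -6$, and $f(p^\nu) = 0$ for all primes $p$ and all $\nu \ge 3$. Then $\lim_{x\to\infty} \frac{1}{x} \sum_{n \le x} (-1)^{n-1} f(n) = \prod_{p > 2 \text{ prime}} \left(1 - \frac{7}{p^2} + \frac{6}{p^3}\right)$, and this limit is nonzero, while the mean value $\lim_{x\to\infty}\frac{1}{x}\sum_{n\le x} f(n) = 0$. -/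
/-!
Wintner's theorem: if `g = F * μ` satisfies `∑ |g n| / n < ∞`, then `F` has mean value
`∑ g n / n`, and for multiplicative `F` this is the Euler product
`∏ₚ (1 - 1/p) (∑ₑ F (pᵉ) / pᵉ)`. For our `f` the Möbius transform vanishes at primes, equals
`-7` and `6` at `p²` and `p³` and vanishes beyond, so Wintner's hypothesis holds, and the factor
`(1 - 1/2)(1 + 1/2 - 6/4)` at `2` is zero. The alternating function `(-1)^(n-1) f(n)` is again
multiplicative, agrees with `f` at odd prime powers and has factor `(1 - 1/2)(1 - 1/2 + 6/4) = 1`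
at `2`, leaving `∏_{p > 2} (1 - 7/p² + 6/p³)`. This is positive: `1 - 7x² + 6x³ =
(1 - x)(1 - 2x)(1 + 3x)` is positive for `x ≤ 1/3`, and the product converges absolutely.
-/

open Filter Topology ArithmeticFunction Finset
open scoped ArithmeticFunction.zeta ArithmeticFunction.Moebius

lemma toArithmeticFunction_apply_of_ne_zero {R : Type*} [Zero R] (f : ℕ → R) {n : ℕ}
    (hn : n ≠ 0) : toArithmeticFunction f n = f n :=
  if_neg hn

lemma isMultiplicative_toArithmeticFunction {R : Type*} [MonoidWithZero R] {f : ℕ → R}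
    (h₁ : f 1 = 1) (hmul : ∀ m n, Nat.Coprime m n → f (m * n) = f m * f n) :
    (toArithmeticFunction f).IsMultiplicative := by
  refine IsMultiplicative.iff_ne_zero.mpr ⟨h₁, fun hm hn hmn => ?_⟩
  simp only [toArithmeticFunction_apply_of_ne_zero f, hm, hn, mul_ne_zero, ne_eq,
    not_false_eq_true, hmul _ _ hmn]

lemma neg_one_pow_mul_sub_one_of_coprime {R : Type*} [Monoid R] [HasDistribNeg R] {m n : ℕ}
    (hm : m ≠ 0) (hn : n ≠ 0) (hmn : Nat.Coprime m n) :
    (-1 : R) ^ (m * n - 1) = (-1) ^ (m - 1) * (-1) ^ (n - 1) := by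
  obtain ⟨a, rfl⟩ := Nat.exists_eq_add_one_of_ne_zero hm
  obtain ⟨b, rfl⟩ := Nat.exists_eq_add_one_of_ne_zero hn
  have hab : Even (a * b) := by
    rw [Nat.even_mul]
    by_contra! h
    have h2 : 2 ∣ Nat.gcd (a + 1) (b + 1) :=
      Nat.dvd_gcd (Nat.even_add_one.mpr h.1).two_dvd (Nat.even_add_one.mpr h.2).two_dvd
    rw [hmn] at h2
    omega
  rw [show (a + 1) * (b + 1) - 1 = a * b + a + b by ring_nf; omega, pow_add, pow_add,
    hab.neg_one_pow, one_mul]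
  simp

noncomputable def altSign : ArithmeticFunction ℝ :=
  toArithmeticFunction fun n => (-1) ^ (n - 1)

lemma isMultiplicative_altSign : altSign.IsMultiplicative := by
  refine IsMultiplicative.iff_ne_zero.mpr
    ⟨by simp [altSign, toArithmeticFunction_apply_of_ne_zero], fun hm hn hmn => ?_⟩
  simp only [altSign, toArithmeticFunction_apply_of_ne_zero _ (mul_ne_zero hm hn),
    toArithmeticFunction_apply_of_ne_zero _ hm, toArithmeticFunction_apply_of_ne_zero _ hn]
  exact neg_one_pow_mul_sub_one_of_coprime hm hn hmn

lemma altSign_apply_of_odd {n : ℕ} (hn : Odd n) : altSign n = 1 := by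
  rw [altSign, toArithmeticFunction_apply_of_ne_zero _ (by rintro rfl; simp at hn)]
  exact (Nat.Odd.sub_odd hn odd_one).neg_one_pow

lemma altSign_two_pow {e : ℕ} (he : e ≠ 0) : altSign (2 ^ e) = -1 := by
  rw [altSign, toArithmeticFunction_apply_of_ne_zero _ (by positivity)]
  exact (Nat.Even.sub_odd Nat.one_le_two_pow ((Nat.even_pow' he).mpr even_two) odd_one).neg_one_pow

lemma mul_moebius_apply_prime_pow_succ {R : Type*} [CommRing R] (F : ArithmeticFunction R)
    {p : ℕ} (hp : p.Prime) (e : ℕ) : (F * μ) (p ^ (e + 1)) = F (p ^ (e + 1)) - F (p ^ e) := by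
  have hF : F * μ * ζ = F := by rw [mul_assoc, coe_moebius_mul_coe_zeta, mul_one]
  conv_rhs => rw [← hF, coe_mul_zeta_apply, coe_mul_zeta_apply, Nat.sum_divisors_prime_pow hp,
    Nat.sum_divisors_prime_pow hp, sum_range_succ]
  ring

lemma natCast_div_div_le (N d : ℕ) : ((N / d : ℕ) : ℝ) / N ≤ 1 / d := by
  rcases eq_or_ne (N : ℝ) 0 with hN | hN
  · simp [hN]
  · calc ((N / d : ℕ) : ℝ) / N ≤ (N / d : ℝ) / N := by gcongr; exact Nat.cast_div_le
      _ = 1 / d := by field_simp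

lemma tendsto_natCast_div_div (d : ℕ) :
    Tendsto (fun N : ℕ => ((N / d : ℕ) : ℝ) / N) atTop (𝓝 (1 / d)) := by
  rcases Nat.eq_zero_or_pos d with rfl | hd
  · simp
  have hlow : ∀ N : ℕ, 0 < N → 1 / (d : ℝ) - 1 / N ≤ ((N / d : ℕ) : ℝ) / N := by
    intro N hN
    have hmod : (N : ℝ) < d * ((N / d : ℕ) : ℝ) + d := by
      exact_mod_cast (by linarith [Nat.lt_div_mul_add (a := N) hd] : N < d * (N / d) + d)
    rw [div_sub_div _ _ (by positivity) (by positivity),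
      div_le_div_iff₀ (by positivity) (by positivity)]
    nlinarith
  have hlim : Tendsto (fun N : ℕ => 1 / (d : ℝ) - 1 / N) atTop (𝓝 (1 / d)) := by
    simpa using (tendsto_const_nhds (x := 1 / (d : ℝ))).sub tendsto_one_div_atTop_nhds_zero_nat
  exact tendsto_of_tendsto_of_tendsto_of_le_of_le' hlim tendsto_const_nhds
    ((eventually_gt_atTop 0).mono hlow) (Eventually.of_forall (natCast_div_div_le · d))

theorem tendsto_mean_of_summable_mul_moebius (F : ArithmeticFunction ℝ)
    (hsum : Summable fun n => |(F * μ) n| / n) :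
    Tendsto (fun N : ℕ => (1 / (N : ℝ)) * ∑ n ∈ Icc 1 N, F n) atTop
      (𝓝 (∑' n, (F * μ) n / n)) := by
  set g := F * (μ : ArithmeticFunction ℝ)
  have hF : g * ζ = F := by rw [mul_assoc, coe_moebius_mul_coe_zeta, mul_one]
  have hterm (N : ℕ) : (1 / (N : ℝ)) * ∑ n ∈ Icc 1 N, F n
      = ∑' d, g d * (((N / d : ℕ) : ℝ) / N) := by
    rw [← hF, show Icc 1 N = Ioc 0 N from rfl, sum_Ioc_mul_zeta_eq_sum, mul_sum,
      tsum_eq_sum (s := Ioc 0 N)]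
    · exact sum_congr rfl fun d _ => by ring
    · intro d hd
      rcases Nat.eq_zero_or_pos d with rfl | hd0
      · simp
      · rw [Nat.div_eq_of_lt (by simpa [hd0] using hd)]; simp
  simp only [hterm]
  refine tendsto_tsum_of_dominated_convergence hsum
    (fun d => by simpa only [mul_one_div] using (tendsto_natCast_div_div d).const_mul (g d))
    (Eventually.of_forall fun N d => ?_)
  rw [norm_mul, Real.norm_eq_abs, Real.norm_of_nonneg (by positivity), div_eq_mul_one_div |g d|]
  exact mul_le_mul_of_nonneg_left (natCast_div_div_le N d) (abs_nonneg _)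

theorem summable_of_isMultiplicative_of_summable_primes {T : ℕ → ℝ} (hT : ∀ n, 0 ≤ T n)
    (hT₀ : T 0 = 0) (hT₁ : T 1 = 1) (hmul : ∀ {m n}, Nat.Coprime m n → T (m * n) = T m * T n)
    (hloc : ∀ {p}, p.Prime → Summable fun e => T (p ^ e))
    (hprimes : Summable fun p : Nat.Primes => ∑' e, T ((p : ℕ) ^ (e + 1))) :
    Summable T := by
  refine summable_of_sum_range_le (c := Real.exp (∑' p : Nat.Primes, ∑' e, T ((p : ℕ) ^ (e + 1))))
    hT fun n => ?_
  obtain ⟨-, hprod⟩ := EulerProduct.summable_and_hasSum_smoothNumbers_prod_primesBelow_tsum hT₁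
    hmul (fun hp => by simpa [Real.norm_of_nonneg (hT _)] using hloc hp) n
  have hsmooth : ∑ i ∈ range n, T i = ∑ i ∈ range n, (n.smoothNumbers).indicator T i := by
    refine sum_congr rfl fun i hi => ?_
    rcases Nat.eq_zero_or_pos i with rfl | hi0
    · simp [hT₀, Nat.smoothNumbers]
    · exact (Set.indicator_of_mem (Nat.mem_smoothNumbers_of_lt hi0 (mem_range.mp hi)) T).symm
  have hlocal (p : ℕ) (hp : p.Prime) : ∑' e, T (p ^ e) = 1 + ∑' e, T (p ^ (e + 1)) := by
    rw [(hloc hp).tsum_eq_zero_add, pow_zero, hT₁]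
  calc ∑ i ∈ range n, T i
      ≤ ∏ p ∈ n.primesBelow, ∑' e, T (p ^ e) := by
        rw [hsmooth]
        exact sum_le_hasSum _ (fun i _ => Set.indicator_nonneg (fun j _ => hT j) i)
          (hasSum_subtype_iff_indicator.mp hprod)
    _ = ∏ p ∈ n.primesBelow, (1 + ∑' e, T (p ^ (e + 1))) :=
        prod_congr rfl fun p hp => hlocal p (Nat.prime_of_mem_primesBelow hp)
    _ ≤ Real.exp (∑ p ∈ n.primesBelow, ∑' e, T (p ^ (e + 1))) :=
        Real.prod_one_add_le_exp_sum _ fun p => tsum_nonneg fun e => hT _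
    _ ≤ Real.exp (∑' p : Nat.Primes, ∑' e, T ((p : ℕ) ^ (e + 1))) := by
        gcongr
        have : ∑ p ∈ ((range n).subtype Nat.Prime : Finset Nat.Primes), ∑' e, T ((p : ℕ) ^ (e + 1))
            ≤ ∑' p : Nat.Primes, ∑' e, T ((p : ℕ) ^ (e + 1)) :=
          Summable.sum_le_tsum (L := .unconditional _) _ (fun _ _ => tsum_nonneg fun _ => hT _)
            hprimes
        rwa [sum_subtype_eq_sum_filter (fun q => ∑' e, T (q ^ (e + 1)))] at this

section CubeFree

variable {F : ArithmeticFunction ℝ} {p : ℕ}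

lemma mul_moebius_apply_prime_pow_of_four_le
    (hcube : ∀ p, p.Prime → ∀ e, 3 ≤ e → F (p ^ e) = 0) (hp : p.Prime) {e : ℕ} (he : 4 ≤ e) :
    (F * μ) (p ^ e) = 0 := by
  obtain ⟨k, rfl⟩ := Nat.exists_eq_add_of_le' he
  rw [mul_moebius_apply_prime_pow_succ F hp, hcube p hp _ (by omega), hcube p hp _ (by omega),
    sub_zero]

lemma hasSum_mul_moebius_prime_pow_div (hF : F.IsMultiplicative)
    (hcube : ∀ p, p.Prime → ∀ e, 3 ≤ e → F (p ^ e) = 0) (hp : p.Prime) :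
    HasSum (fun e => (F * μ) (p ^ e) / ((p ^ e : ℕ) : ℝ))
      ((1 - 1 / p) * (1 + F p / p + F (p ^ 2) / p ^ 2)) := by
  have hvanish : ∀ e ∉ range 4, (F * μ) (p ^ e) / ((p ^ e : ℕ) : ℝ) = 0 := fun e he => by
    rw [mul_moebius_apply_prime_pow_of_four_le hcube hp (by simpa using he), zero_div]
  convert hasSum_sum_of_ne_finset_zero (L := .unconditional ℕ) hvanish using 1
  have hp0 : (p : ℝ) ≠ 0 := Nat.cast_ne_zero.mpr hp.ne_zero
  have hg₁ := mul_moebius_apply_prime_pow_succ F hp 0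
  simp only [sum_range_succ, sum_range_zero, Nat.cast_pow, mul_moebius_apply_prime_pow_succ F hp,
    hcube p hp 3 le_rfl, zero_add, pow_zero, pow_one, mul_apply_one, hF.map_one] at hg₁ ⊢
  rw [hg₁, intCoe_apply, moebius_apply_one, Int.cast_one]
  field_simp
  ring

theorem summable_abs_mul_moebius_div (hF : F.IsMultiplicative)
    (hcube : ∀ p, p.Prime → ∀ e, 3 ≤ e → F (p ^ e) = 0) {c : ℝ}
    (hodd : ∀ᶠ p : Nat.Primes in cofinite, F p = 1 ∧ F ((p : ℕ) ^ 2) = c) :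
    Summable fun n => |(F * μ) n| / n := by
  have hg : (F * μ).IsMultiplicative := hF.mul isMultiplicative_moebius.intCast
  have hvanish {p e : ℕ} (hp : p.Prime) (he : 4 ≤ e) :
      |(F * μ) (p ^ e)| / ((p ^ e : ℕ) : ℝ) = 0 := by
    rw [mul_moebius_apply_prime_pow_of_four_le hcube hp he, abs_zero, zero_div]
  have hloc {p : ℕ} (hp : p.Prime) : Summable fun e => |(F * μ) (p ^ e)| / ((p ^ e : ℕ) : ℝ) :=
    summable_of_ne_finset_zero (s := range 4) fun e he => hvanish hp (by simpa using he)
  have hpow (k : ℕ) (hk : 1 < k) : Summable fun p : Nat.Primes => 1 / (p : ℝ) ^ k :=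
    (Real.summable_one_div_nat_pow.mpr hk).comp_injective Nat.Primes.coe_nat_injective
  have hprimes : Summable fun p : Nat.Primes =>
      ∑' e, |(F * μ) ((p : ℕ) ^ (e + 1))| / (((p : ℕ) ^ (e + 1) : ℕ) : ℝ) := by
    refine (((hpow 2 one_lt_two).mul_left |c - 1|).add
      ((hpow 3 (by norm_num)).mul_left |c|)).congr_cofinite (hodd.mono fun p ⟨h₁, h₂⟩ => ?_)
    have hp := p.prop
    symm
    dsimp only
    rw [tsum_eq_sum (s := range 3) fun e he => hvanish (e := e + 1) hp (by simp at he; omega)]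
    simp only [sum_range_succ, sum_range_zero, zero_add, pow_one, Nat.cast_pow,
      mul_moebius_apply_prime_pow_succ F hp, hcube _ hp 3 le_rfl, pow_zero, hF.map_one, h₁, h₂,
      sub_self, abs_zero, zero_div, zero_sub, abs_neg]
    ring
  exact summable_of_isMultiplicative_of_summable_primes (fun n => by positivity) (by simp)
    (by simp [hg.map_one]) (fun hmn => by simp [hg.map_mul_of_coprime hmn, abs_mul,
      div_mul_div_comm]) hloc hprimes

theorem exists_hasProd_tendsto_mean (hF : F.IsMultiplicative)
    (hcube : ∀ p, p.Prime → ∀ e, 3 ≤ e → F (p ^ e) = 0) {c : ℝ}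
    (hodd : ∀ᶠ p : Nat.Primes in cofinite, F p = 1 ∧ F ((p : ℕ) ^ 2) = c) :
    ∃ a, HasProd (fun p : Nat.Primes => (1 - 1 / p) * (1 + F p / p + F ((p : ℕ) ^ 2) / p ^ 2)) a ∧
      Tendsto (fun N : ℕ => (1 / (N : ℝ)) * ∑ n ∈ Icc 1 N, F n) atTop (𝓝 a) := by
  have hsum := summable_abs_mul_moebius_div hF hcube hodd
  have hg : (F * μ).IsMultiplicative := hF.mul isMultiplicative_moebius.intCast
  refine ⟨_, ?_, tendsto_mean_of_summable_mul_moebius F hsum⟩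
  have hEuler := EulerProduct.eulerProduct_hasProd (f := fun n => (F * μ) n / n)
    (by simp [hg.map_one]) (fun hmn => by simp [hg.map_mul_of_coprime hmn, div_mul_div_comm])
    (by simpa [abs_div] using hsum) (by simp)
  rwa [funext fun p : Nat.Primes => (hasSum_mul_moebius_prime_pow_div hF hcube p.2).tsum_eq]
    at hEuler

end CubeFree

theorem tprod_one_sub_seven_div_sq_add_six_div_cube_pos {s : Set ℕ} (hs : ∀ n ∈ s, 2 < n) :
    0 < ∏' n : s, (1 - 7 / (n : ℝ) ^ 2 + 6 / (n : ℝ) ^ 3) := by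
  have hfactor (n : s) : 0 < 1 - 7 / (n : ℝ) ^ 2 + 6 / (n : ℝ) ^ 3 := by
    have h3 : (3 : ℝ) ≤ n := by exact_mod_cast hs n n.2
    have hx : (1 - 7 / (n : ℝ) ^ 2 + 6 / (n : ℝ) ^ 3)
        = (1 - 1 / n) * (1 - 2 / n) * (1 + 3 / n) := by
      field_simp
      ring
    rw [hx]
    have : (1 : ℝ) / n ≤ 1 / 3 := by gcongr
    have : (2 : ℝ) / n ≤ 2 / 3 := by gcongr
    have : (0 : ℝ) ≤ 3 / n := by positivity
    apply mul_pos (mul_pos _ _) _ <;> linarith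
  have hsummable : Summable fun n : s => -7 * (1 / (n : ℝ) ^ 2) + 6 * (1 / (n : ℝ) ^ 3) := by
    have hpow (k : ℕ) (hk : 1 < k) : Summable fun n : s => 1 / (n : ℝ) ^ k :=
      (Real.summable_one_div_nat_pow.mpr hk).comp_injective Subtype.val_injective
    exact ((hpow 2 one_lt_two).mul_left _).add ((hpow 3 (by norm_num)).mul_left _)
  have hlog : Summable fun n : s => Real.log (1 - 7 / (n : ℝ) ^ 2 + 6 / (n : ℝ) ^ 3) :=
    (Real.summable_log_one_add_of_summable hsummable).congr fun n => by ring_nf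
  rw [← Real.rexp_tsum_eq_tprod hfactor hlog]
  exact Real.exp_pos _

section

variable {F : ArithmeticFunction ℝ}

theorem tendsto_mean_eq_zero (hF : F.IsMultiplicative) (h₁ : ∀ p, p.Prime → F p = 1)
    (h₂ : ∀ p, p.Prime → F (p ^ 2) = -6) (h₃ : ∀ p, p.Prime → ∀ e, 3 ≤ e → F (p ^ e) = 0) :
    Tendsto (fun N : ℕ => (1 / (N : ℝ)) * ∑ n ∈ Icc 1 N, F n) atTop (𝓝 0) := by
  obtain ⟨a, hprod, hmean⟩ :=
    exists_hasProd_tendsto_mean hF h₃ (Eventually.of_forall fun p => ⟨h₁ p p.2, h₂ p p.2⟩)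
  have ha : a = 0 := hprod.unique <| hasProd_zero_of_exists_eq_zero
    ⟨⟨2, Nat.prime_two⟩, by norm_num [h₁ 2 Nat.prime_two, show F 4 = -6 from h₂ 2 Nat.prime_two]⟩
  rwa [ha] at hmean

theorem tendsto_mean_altSign_pmul (hF : F.IsMultiplicative) (h₁ : ∀ p, p.Prime → F p = 1)
    (h₂ : ∀ p, p.Prime → F (p ^ 2) = -6) (h₃ : ∀ p, p.Prime → ∀ e, 3 ≤ e → F (p ^ e) = 0) :
    Tendsto (fun N : ℕ => (1 / (N : ℝ)) * ∑ n ∈ Icc 1 N, altSign.pmul F n) atTop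
      (𝓝 (∏' p : {p : ℕ // p.Prime ∧ 2 < p}, (1 - 7 / (p : ℝ) ^ 2 + 6 / (p : ℝ) ^ 3))) := by
  have hodd {p : ℕ} (hp : p.Prime) (hp2 : p ≠ 2) :
      altSign.pmul F p = 1 ∧ altSign.pmul F (p ^ 2) = -6 := by
    simp only [pmul_apply, altSign_apply_of_odd (hp.odd_of_ne_two hp2),
      altSign_apply_of_odd ((hp.odd_of_ne_two hp2).pow), one_mul, h₁ p hp, h₂ p hp, and_self]
  have hcube (p : ℕ) (hp : p.Prime) (e : ℕ) (he : 3 ≤ e) : altSign.pmul F (p ^ e) = 0 := by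
    rw [pmul_apply, h₃ p hp e he, mul_zero]
  obtain ⟨b, hprod, hmean⟩ := exists_hasProd_tendsto_mean (isMultiplicative_altSign.pmul hF) hcube
    ((eventually_cofinite_ne ⟨2, Nat.prime_two⟩).mono fun p hp =>
      hodd p.2 fun h => hp (Subtype.ext h))
  let i : {p : ℕ // p.Prime ∧ 2 < p} ↪ Nat.Primes := Subtype.impEmbedding _ _ fun _ hp => hp.1
  have h2 : ∀ p ∉ Set.range i,
      (1 - 1 / (p : ℝ)) * (1 + altSign.pmul F p / p + altSign.pmul F ((p : ℕ) ^ 2) / p ^ 2)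
        = 1 := by
    intro p hp
    obtain rfl : p = ⟨2, Nat.prime_two⟩ := by
      by_contra h
      exact hp ⟨⟨p, p.2, p.2.two_le.lt_of_ne fun h' => h (Subtype.ext h'.symm)⟩, rfl⟩
    have hs2 : altSign 2 = -1 := altSign_two_pow one_ne_zero
    have hs4 : altSign 4 = -1 := altSign_two_pow two_ne_zero
    norm_num [pmul_apply, hs2, hs4, h₁ 2 Nat.prime_two, show F 4 = -6 from h₂ 2 Nat.prime_two]
  rw [← i.injective.hasProd_iff h2] at hprod
  have hfactor (q : {p : ℕ // p.Prime ∧ 2 < p}) :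
      (1 - 1 / (q : ℝ)) * (1 + altSign.pmul F q / q + altSign.pmul F ((q : ℕ) ^ 2) / (q : ℝ) ^ 2)
        = 1 - 7 / (q : ℝ) ^ 2 + 6 / (q : ℝ) ^ 3 := by
    have hq : ((q : ℕ) : ℝ) ≠ 0 := by have := q.2.1.ne_zero; positivity
    rw [(hodd q.2.1 q.2.2.ne').1, (hodd q.2.1 q.2.2.ne').2]
    field_simp
    ring
  have hprod' : HasProd (fun q : {p : ℕ // p.Prime ∧ 2 < p} =>
      1 - 7 / (q : ℝ) ^ 2 + 6 / (q : ℝ) ^ 3) b := funext hfactor ▸ hprod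
  rwa [hprod'.tprod_eq]

end

/-- for the multiplicative function with `f(p) = 1`, `f(p²) = -6`,
`f(p^ν) = 0` (`ν ≥ 3`), the mean value is `0`, and the alternating mean value exists
and equals `∏_{p > 2} (1 - 7/p² + 6/p³) ≠ 0`. -/
theorem alternating_mean_value_special_function
    (f : ℕ → ℝ)
    (hf1 : f 1 = 1)
    (hfmult : ∀ m n : ℕ, Nat.Coprime m n → f (m * n) = f m * f n)
    (hp1 : ∀ p : ℕ, p.Prime → f p = 1)
    (hp2 : ∀ p : ℕ, p.Prime → f (p ^ 2) = -6)
    (hp3 : ∀ p : ℕ, p.Prime → ∀ ν : ℕ, 3 ≤ ν → f (p ^ ν) = 0) :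
    Tendsto (fun N : ℕ => (1 / (N : ℝ)) * ∑ n ∈ Finset.Icc 1 N, f n) atTop (nhds 0) ∧
    Tendsto (fun N : ℕ => (1 / (N : ℝ)) * ∑ n ∈ Finset.Icc 1 N, (-1 : ℝ) ^ (n - 1) * f n)
      atTop
      (nhds (∏' p : {p : ℕ // p.Prime ∧ 2 < p},
        (1 - 7 / (p : ℝ) ^ 2 + 6 / (p : ℝ) ^ 3))) ∧
    (∏' p : {p : ℕ // p.Prime ∧ 2 < p}, (1 - 7 / (p : ℝ) ^ 2 + 6 / (p : ℝ) ^ 3)) ≠ 0 := by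
  set F := toArithmeticFunction f
  have hF : F.IsMultiplicative := isMultiplicative_toArithmeticFunction hf1 hfmult
  have hFf {n : ℕ} (hn : n ≠ 0) : F n = f n := toArithmeticFunction_apply_of_ne_zero f hn
  have h₁ (p : ℕ) (hp : p.Prime) : F p = 1 := (hFf hp.ne_zero).trans (hp1 p hp)
  have h₂ (p : ℕ) (hp : p.Prime) : F (p ^ 2) = -6 :=
    (hFf (pow_ne_zero _ hp.ne_zero)).trans (hp2 p hp)
  have h₃ (p : ℕ) (hp : p.Prime) (e : ℕ) (he : 3 ≤ e) : F (p ^ e) = 0 :=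
    (hFf (pow_ne_zero _ hp.ne_zero)).trans (hp3 p hp e he)
  have hIcc {n N : ℕ} (hn : n ∈ Icc 1 N) : n ≠ 0 := by simp at hn; omega
  refine ⟨?_, ?_, (tprod_one_sub_seven_div_sq_add_six_div_cube_pos fun _ hp => hp.2).ne'⟩
  · refine (tendsto_mean_eq_zero hF h₁ h₂ h₃).congr fun N => ?_
    rw [sum_congr rfl fun n hn => hFf (hIcc hn)]
  · refine (tendsto_mean_altSign_pmul hF h₁ h₂ h₃).congr fun N => ?_
    rw [sum_congr rfl fun n hn => by
      rw [pmul_apply, altSign, toArithmeticFunction_apply_of_ne_zero _ (hIcc hn), hFf (hIcc hn)]]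
end
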